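/- For every integer ℓ ≥ 4, β₂(ℓ) ≥ 1 - 1/(2ℓ), while for ℓ = 2 and ℓ = 3, β₂(ℓ) ≤ 1 - 1/(2ℓ). -/

import Mathlib

/-- The digamma function `ψ(x) = Γ'(x)/Γ(x)`. -/
noncomputable def digamma (x : ℝ) : ℝ := deriv Real.Gamma x / Real.Gamma x

/-- `g₂(x) = 3/2 - γ - ψ(x+1) - 2x(ψ(2x) - ψ(x))`. -/
noncomputable def g2 (x : ℝ) : ℝ :=
  3 / 2 - Real.eulerMascheroniConstant - digamma (x + 1)
    - 2 * x * (digamma (2 * x) - digamma x)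

/-- `g₃(x) = 2 - γ - ψ(x+1) + (x/2)(5-3x)ψ(x) - x(1-6x)ψ(2x) - (3x/2)(1+3x)ψ(3x)`. -/
noncomputable def g3 (x : ℝ) : ℝ :=
  2 - Real.eulerMascheroniConstant - digamma (x + 1)
    + x / 2 * (5 - 3 * x) * digamma x
    - x * (1 - 6 * x) * digamma (2 * x)
    - 3 * x / 2 * (1 + 3 * x) * digamma (3 * x)

/-- `β₁(ℓ) = (1/ℓ)(-γ - ψ(1/ℓ))`. -/
noncomputable def beta1 (l : ℝ) : ℝ :=
  1 / l * (-Real.eulerMascheroniConstant - digamma (1 / l))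

/-- `β₂(ℓ) = (1/ℓ)[1 - γ - (1 - 2/ℓ)ψ(1/ℓ) - (2/ℓ)ψ(2/ℓ)]`. -/
noncomputable def beta2 (l : ℝ) : ℝ :=
  1 / l * (1 - Real.eulerMascheroniConstant - (1 - 2 / l) * digamma (1 / l)
    - 2 / l * digamma (2 / l))

/-- `β₃(ℓ) = (1/ℓ)[3/2 - γ - (1 - 3/(2ℓ))(1 - 1/ℓ)ψ(1/ℓ) - (1/ℓ)(1 - 6/ℓ)ψ(2/ℓ)
  - (3/(2ℓ))(1 + 3/ℓ)ψ(3/ℓ)]`. -/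
noncomputable def beta3 (l : ℝ) : ℝ :=
  1 / l * (3 / 2 - Real.eulerMascheroniConstant
    - (1 - 3 / (2 * l)) * (1 - 1 / l) * digamma (1 / l)
    - 1 / l * (1 - 6 / l) * digamma (2 / l)
    - 3 / (2 * l) * (1 + 3 / l) * digamma (3 / l))

/-!
Put `x = 1 / ℓ`. Then `ℓ (β₂(ℓ) - (1 - 1/(2ℓ))) = g₂(x)`, and the series
`-ψ(y) - γ = ∑ₙ (1/(n + y) - 1/(n + 1))` (squeezed out of the monotonicity of `ψ`, i.e. the
log-convexity of `Γ`) turns `g₂(x) + 1/2` into a series `∑ₙ tₙ(x)` of rational functions.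
The comparison series `∑ₙ (1 + x)/2 · (1/(n + 1 + x) - 1/(n + 2 + x))` telescopes to exactly `1/2`,
and `tₙ(x)` minus its `n`-th term is a quadratic in `n` over a positive denominator whose
coefficients are all `≥ 0` for `x ≤ 1/4` and all `≤ 0` for `x ≥ 1/3`.
So `g₂ ≥ 0` on `(0, 1/4]` and `g₂ ≤ 0` on `[1/3, 1/2]`.
-/

open Real Filter Topology Finset Set

local notation "γ" => Real.eulerMascheroniConstant

lemma digamma_one : digamma 1 = -γ := by
  rw [digamma, hasDerivAt_Gamma_one.deriv, Gamma_one, div_one]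

lemma digamma_add_one {x : ℝ} (hx : ∀ m : ℕ, x ≠ -m) :
    digamma (x + 1) = digamma x + 1 / x := by
  have hx0 : x ≠ 0 := by simpa using hx 0
  have hderiv : deriv Gamma (x + 1) = Gamma x + x * deriv Gamma x := by
    have h : (fun y ↦ Gamma (y + 1)) =ᶠ[𝓝 x] fun y ↦ y * Gamma y := by
      filter_upwards [eventually_ne_nhds hx0] with y hy using Gamma_add_one hy
    rw [← deriv_comp_add_const, h.deriv_eq,
      ((hasDerivAt_id' x).fun_mul (differentiableAt_Gamma hx).hasDerivAt).deriv, one_mul]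
  rw [digamma, digamma, hderiv, Gamma_add_one hx0]
  field_simp [Gamma_ne_zero hx]
  ring

lemma digamma_add_one_of_pos {x : ℝ} (hx : 0 < x) : digamma (x + 1) = digamma x + 1 / x :=
  digamma_add_one fun m ↦ ((neg_nonpos.mpr m.cast_nonneg).trans_lt hx).ne'

lemma digamma_add_nat {x : ℝ} (hx : 0 < x) (N : ℕ) :
    digamma (x + N) = digamma x + ∑ k ∈ range N, 1 / (k + x) := by
  induction N with
  | zero => simp
  | succ n ih =>
    rw [Nat.cast_succ, ← add_assoc, digamma_add_one_of_pos (by positivity), ih, sum_range_succ,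
      add_comm x n]
    ring

lemma monotoneOn_digamma : MonotoneOn digamma (Ioi 0) := by
  have hd : ∀ x ∈ Ioi (0 : ℝ), DifferentiableAt ℝ Gamma x := fun x hx ↦
    (differentiableOn_Gamma_Ioi x hx).differentiableAt (Ioi_mem_nhds hx)
  have hlog : ∀ x ∈ Ioi (0 : ℝ), deriv (log ∘ Gamma) x = digamma x := fun x hx ↦
    ((hd x hx).hasDerivAt.log (Gamma_pos_of_pos hx).ne').deriv
  intro x hx y hy hxy
  rw [← hlog x hx, ← hlog y hy]
  exact convexOn_log_Gamma.monotoneOn_deriv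
    (fun z hz ↦ (hd z hz).log (Gamma_pos_of_pos hz).ne') hx hy hxy

lemma tendsto_digamma_add_nat_sub {x : ℝ} (hx : 0 < x) (hx1 : x ≤ 1) :
    Tendsto (fun N : ℕ ↦ digamma (x + N) - digamma (1 + N)) atTop (𝓝 0) := by
  have hlow : Tendsto (fun N : ℕ ↦ -(1 / (N : ℝ))) atTop (𝓝 0) := by
    simpa using (tendsto_one_div_atTop_nhds_zero_nat (𝕜 := ℝ)).neg
  refine tendsto_of_tendsto_of_tendsto_of_le_of_le' hlow tendsto_const_nhds ?_ ?_
  · filter_upwards [eventually_ge_atTop 1] with N hN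
    have hN0 : (0 : ℝ) < N := by exact_mod_cast hN
    have hstep : digamma (1 + N) = digamma N + 1 / N := by
      rw [add_comm]
      exact digamma_add_one_of_pos hN0
    have hmono : digamma N ≤ digamma (x + N) :=
      monotoneOn_digamma hN0 (show 0 < x + N by positivity) (by linarith)
    linarith
  · filter_upwards with N
    have hmono : digamma (x + N) ≤ digamma (1 + N) :=
      monotoneOn_digamma (show 0 < x + N by positivity) (show 0 < 1 + (N : ℝ) by positivity)
        (by linarith)
    linarith

lemma hasSum_digamma {x : ℝ} (hx : 0 < x) (hx1 : x ≤ 1) :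
    HasSum (fun n : ℕ ↦ 1 / (n + x) - 1 / (n + 1)) (-digamma x - γ) := by
  have hnn : ∀ n : ℕ, 0 ≤ 1 / (n + x) - 1 / ((n : ℝ) + 1) := fun n ↦
    sub_nonneg.mpr (one_div_le_one_div_of_le (by positivity) (by linarith))
  have hpartial : ∀ N : ℕ, ∑ n ∈ range N, (1 / (n + x) - 1 / ((n : ℝ) + 1)) =
      digamma (x + N) - digamma (1 + N) - (digamma x + γ) := by
    intro N
    rw [sum_sub_distrib, digamma_add_nat hx, digamma_add_nat one_pos, digamma_one]
    ring
  rw [hasSum_iff_tendsto_nat_of_nonneg hnn]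
  simp_rw [hpartial]
  convert (tendsto_digamma_add_nat_sub hx hx1).sub_const (digamma x + γ) using 2
  ring

lemma hasSum_one_div_add_sub_one_div_add_one {a : ℝ} (ha : 0 < a) :
    HasSum (fun n : ℕ ↦ 1 / (n + a) - 1 / (n + 1 + a)) (1 / a) := by
  have hnn : ∀ n : ℕ, 0 ≤ 1 / (n + a) - 1 / ((n : ℝ) + 1 + a) := fun n ↦
    sub_nonneg.mpr (one_div_le_one_div_of_le (by positivity) (by linarith))
  have hpartial : ∀ N : ℕ, ∑ n ∈ range N, (1 / (n + a) - 1 / ((n : ℝ) + 1 + a)) =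
      1 / a - 1 / (N + a) := by
    intro N
    simpa using sum_range_sub' (fun n : ℕ ↦ 1 / ((n : ℝ) + a)) N
  rw [hasSum_iff_tendsto_nat_of_nonneg hnn]
  simp_rw [hpartial]
  have h : Tendsto (fun N : ℕ ↦ ((N : ℝ) + a)⁻¹) atTop (𝓝 0) :=
    (tendsto_atTop_add_const_right _ a tendsto_natCast_atTop_atTop).inv_tendsto_atTop
  simpa [one_div] using h.const_sub (1 / a)

/-- `(1 - 2x)(1/(n+1+x) - 1/(n+2)) + 2x(1/(n+1+2x) - 1/(n+2))`: the `(n+1)`-st term of the series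
of `(1 - 2x)(-ψ(x) - γ) + 2x(-ψ(2x) - γ)`. -/
noncomputable def g2Term (x : ℝ) (n : ℕ) : ℝ :=
  1 / (n + 1 + x) - 1 / (n + 2) - 2 * x ^ 2 / ((n + 1 + x) * (n + 1 + 2 * x))

noncomputable def g2Comparison (x : ℝ) (n : ℕ) : ℝ :=
  (1 + x) / 2 * (1 / (n + 1 + x) - 1 / (n + 2 + x))

lemma hasSum_g2Term {x : ℝ} (hx : 0 < x) (hx2 : x ≤ 1 / 2) :
    HasSum (g2Term x) (g2 x + 1 / 2) := by
  have hS := (hasSum_nat_add_iff' 1).mpr <|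
    ((hasSum_digamma hx (by linarith)).mul_left (1 - 2 * x)).add
      ((hasSum_digamma (by positivity : 0 < 2 * x) (by linarith)).mul_left (2 * x))
  have h : HasSum (g2Term x) _ := hS.congr_fun fun n ↦ by
    simp only [g2Term]
    push_cast
    field_simp
    ring
  convert h using 1
  rw [g2, digamma_add_one_of_pos hx]
  simp only [sum_range_one, Nat.cast_zero, zero_add]
  field_simp
  ring

lemma hasSum_g2Comparison {x : ℝ} (hx : -1 < x) : HasSum (g2Comparison x) (1 / 2) := by
  have hx1 : 0 < 1 + x := by linarith
  have h := (hasSum_one_div_add_sub_one_div_add_one hx1).mul_left ((1 + x) / 2)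
  rw [show (1 + x) / 2 * (1 / (1 + x)) = 1 / 2 by field_simp [hx1.ne']] at h
  exact h.congr_fun fun n ↦ by rw [g2Comparison]; ring

lemma g2Term_sub_g2Comparison {x : ℝ} (hx : 0 ≤ x) (n : ℕ) :
    g2Term x n - g2Comparison x n =
      ((1 + x) * (1 - 4 * x) * n ^ 2 + (3 - 5 * x - 24 * x ^ 2 - 4 * x ^ 3) * n
        + 2 * (1 - 13 * x ^ 2 - 6 * x ^ 3)) /
      (2 * (n + 1 + x) * (n + 2) * (n + 1 + 2 * x) * (n + 2 + x)) := by
  rw [g2Term, g2Comparison]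
  field_simp
  ring

lemma g2Comparison_le_g2Term {x : ℝ} (hx : 0 ≤ x) (hx4 : x ≤ 1 / 4) (n : ℕ) :
    g2Comparison x n ≤ g2Term x n := by
  rw [← sub_nonneg, g2Term_sub_g2Comparison hx]
  have h2 : 0 ≤ (1 + x) * (1 - 4 * x) := by nlinarith
  have h1 : 0 ≤ 3 - 5 * x - 24 * x ^ 2 - 4 * x ^ 3 := by nlinarith
  have h0 : 0 ≤ 1 - 13 * x ^ 2 - 6 * x ^ 3 := by nlinarith
  positivity

lemma g2Term_le_g2Comparison {x : ℝ} (hx : 1 / 3 ≤ x) (n : ℕ) :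
    g2Term x n ≤ g2Comparison x n := by
  rw [← sub_nonpos, g2Term_sub_g2Comparison (by linarith)]
  have hn : (0 : ℝ) ≤ n := n.cast_nonneg
  apply div_nonpos_of_nonpos_of_nonneg _ (by positivity)
  have h2 : (1 + x) * (1 - 4 * x) ≤ 0 := by nlinarith
  have h1 : 3 - 5 * x - 24 * x ^ 2 - 4 * x ^ 3 ≤ 0 := by nlinarith
  have h0 : 1 - 13 * x ^ 2 - 6 * x ^ 3 ≤ 0 := by nlinarith
  nlinarith [mul_nonpos_of_nonpos_of_nonneg h2 (sq_nonneg (n : ℝ)),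
    mul_nonpos_of_nonpos_of_nonneg h1 hn]

lemma g2_nonneg {x : ℝ} (hx : 0 < x) (hx4 : x ≤ 1 / 4) : 0 ≤ g2 x := by
  have h := hasSum_le (g2Comparison_le_g2Term hx.le hx4) (hasSum_g2Comparison (by linarith))
    (hasSum_g2Term hx (by linarith))
  linarith

lemma g2_nonpos {x : ℝ} (hx3 : 1 / 3 ≤ x) (hx2 : x ≤ 1 / 2) : g2 x ≤ 0 := by
  have h := hasSum_le (g2Term_le_g2Comparison hx3) (hasSum_g2Term (by linarith) hx2)
    (hasSum_g2Comparison (by linarith))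
  linarith

lemma beta2_sub_eq_g2 {l : ℝ} (hl : 0 < l) :
    beta2 l - (1 - 1 / (2 * l)) = 1 / l * g2 (1 / l) := by
  rw [beta2, g2, digamma_add_one_of_pos (by positivity), show 2 * (1 / l) = 2 / l by ring]
  field_simp
  ring

lemma one_sub_one_div_two_mul_le_beta2 {l : ℝ} (hl : 4 ≤ l) : 1 - 1 / (2 * l) ≤ beta2 l := by
  rw [← sub_nonneg, beta2_sub_eq_g2 (by linarith)]
  refine mul_nonneg (by positivity) (g2_nonneg (by positivity) ?_)
  rw [div_le_div_iff₀ (by linarith) (by norm_num)]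
  linarith

lemma beta2_le_one_sub_one_div_two_mul {l : ℝ} (hl2 : 2 ≤ l) (hl3 : l ≤ 3) :
    beta2 l ≤ 1 - 1 / (2 * l) := by
  rw [← sub_nonpos, beta2_sub_eq_g2 (by linarith)]
  refine mul_nonpos_of_nonneg_of_nonpos (by positivity) (g2_nonpos ?_ ?_)
  · rw [div_le_div_iff₀ (by norm_num) (by linarith)]
    linarith
  · rw [div_le_div_iff₀ (by linarith) (by norm_num)]
    linarith

theorem beta2_vs_alpha2 :
    (∀ ℓ : ℕ, 4 ≤ ℓ → 1 - 1 / (2 * (ℓ : ℝ)) ≤ beta2 (ℓ : ℝ)) ∧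
    beta2 (2 : ℝ) ≤ 1 - 1 / (2 * (2 : ℝ)) ∧
    beta2 (3 : ℝ) ≤ 1 - 1 / (2 * (3 : ℝ)) :=
  ⟨fun ℓ hℓ ↦ one_sub_one_div_two_mul_le_beta2 (by exact_mod_cast hℓ),
    beta2_le_one_sub_one_div_two_mul le_rfl (by norm_num),
    beta2_le_one_sub_one_div_two_mul (by norm_num) le_rfl⟩
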